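/- arXiv:1710.01651 — 9 statements merged into one kernel-verified Lean document; each statement's English description precedes it below -/
import Mathlib

section
/- For a topological space X and a family B of nonempty subsets of X, the selection principle S₁(O_B, O_B) holds in X if and only if S₁(O(B⁺), O(B⁺)) holds, where O_B denotes the collection of B-coverings of X, O(B⁺) denotes the collection of open coverings of the hyperspace B⁺, and B⁺ is B with the upper semi-finite topology. -/
/-- `𝒰` is a `𝓑`-covering of `X`: a family of open sets such that every member of `𝓑`
is contained in some member of `𝒰`. -/
def IsBCover {X : Type*} [TopologicalSpace X] (𝓑 𝒰 : Set (Set X)) : Prop :=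
  (∀ U ∈ 𝒰, IsOpen U) ∧ ∀ B ∈ 𝓑, ∃ U ∈ 𝒰, B ⊆ U

/-- The upper semi-finite topology on the family `𝓑`, generated by the sets
`⟨U⟩ = {B ∈ 𝓑 : B ⊆ U}` for `U` open in `X`. -/
def upperTop {X : Type*} [TopologicalSpace X] (𝓑 : Set (Set X)) : TopologicalSpace ↥𝓑 :=
  TopologicalSpace.generateFrom {S | ∃ U : Set X, IsOpen U ∧ S = {b : ↥𝓑 | ↑b ⊆ U}}

/-- The selection principle `S₁(𝒜, 𝒞)`. -/
def S1 {α : Type*} (𝒜 𝒞 : Set (Set α)) : Prop :=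
  ∀ A : ℕ → Set α, (∀ n, A n ∈ 𝒜) →
    ∃ c : ℕ → α, (∀ n, c n ∈ A n) ∧ Set.range c ∈ 𝒞

/-- The family of open coverings of `𝓑⁺`, the hyperspace `𝓑` with the upper
semi-finite topology. -/
def hyperOpenCovers {X : Type*} [TopologicalSpace X] (𝓑 : Set (Set X)) :
    Set (Set (Set ↥𝓑)) :=
  {𝒲 | (∀ W ∈ 𝒲, @IsOpen _ (upperTop 𝓑) W) ∧ ⋃₀ 𝒲 = Set.univ}

/-!
Both principles are the same selection game played on two descriptions of one object: an open
`U ⊆ X` contains `B ∈ 𝓑` exactly when the basic open set `⟨U⟩` of `𝓑⁺` contains the point `B`.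
A `𝓑`-covering `𝒰` thus gives the open covering `{⟨U⟩ : U ∈ 𝒰}` of `𝓑⁺`, and since the sets `⟨U⟩`
form a basis of `𝓑⁺`, an open covering `𝒲` of `𝓑⁺` is refined by the `𝓑`-covering of all open
`U` with `⟨U⟩` inside some member of `𝒲`. Selections transfer along these refinements.
-/

open Set Topology TopologicalSpace

theorem S1.of_refines {α β : Type*} {𝒜 𝒜' : Set (Set α)} {𝒞 𝒞' : Set (Set β)}
    (R : α → β → Prop) (hrefine : ∀ C ∈ 𝒞, ∃ A ∈ 𝒜, ∀ a ∈ A, ∃ b ∈ C, R a b)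
    (hrange : ∀ (a : ℕ → α) (b : ℕ → β), (∀ n, R (a n) (b n)) → range a ∈ 𝒜' → range b ∈ 𝒞')
    (h : S1 𝒜 𝒜') : S1 𝒞 𝒞' := by
  intro C hC
  choose A hA hAC using fun n => hrefine (C n) (hC n)
  obtain ⟨a, haA, ha⟩ := h A hA
  choose b hbC hab using fun n => hAC n (a n) (haA n)
  exact ⟨b, hbC, hrange a b hab ha⟩

section Hyperspace

variable {X : Type*} (𝓑 : Set (Set X))

/-- The basic open set `⟨U⟩` of `𝓑⁺`. -/
def upperBasic (U : Set X) : Set ↥𝓑 := {b | (b : Set X) ⊆ U}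

theorem upperBasic_inter (U V : Set X) :
    upperBasic 𝓑 (U ∩ V) = upperBasic 𝓑 U ∩ upperBasic 𝓑 V :=
  ext fun _ => subset_inter_iff

variable [TopologicalSpace X]

theorem isOpen_upperBasic {U : Set X} (hU : IsOpen U) : IsOpen[upperTop 𝓑] (upperBasic 𝓑 U) :=
  .basic _ ⟨U, hU, rfl⟩

theorem isTopologicalBasis_upperBasic :
    @IsTopologicalBasis _ (upperTop 𝓑) {S | ∃ U : Set X, IsOpen U ∧ S = upperBasic 𝓑 U} := by
  refine @IsTopologicalBasis.mk _ (upperTop 𝓑) _ ?_ ?_ rfl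
  · rintro _ ⟨U, hU, rfl⟩ _ ⟨V, hV, rfl⟩ b hb
    exact ⟨_, ⟨U ∩ V, hU.inter hV, rfl⟩, (upperBasic_inter 𝓑 U V).symm ▸ hb,
      (upperBasic_inter 𝓑 U V).le⟩
  · exact eq_univ_of_forall fun b => ⟨_, ⟨univ, isOpen_univ, rfl⟩, subset_univ (b : Set X)⟩

theorem exists_upperBasic_subset_of_isOpen {W : Set ↥𝓑} (hW : IsOpen[upperTop 𝓑] W) {b : ↥𝓑}
    (hb : b ∈ W) : ∃ U, IsOpen U ∧ (b : Set X) ⊆ U ∧ upperBasic 𝓑 U ⊆ W := by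
  obtain ⟨_, ⟨U, hU, rfl⟩, hbU, hUW⟩ :=
    @IsTopologicalBasis.exists_subset_of_mem_open _ (upperTop 𝓑) _
      (isTopologicalBasis_upperBasic 𝓑) _ _ hb hW
  exact ⟨U, hU, hbU, hUW⟩

theorem isBCover_setOf_upperBasic_subset {𝒲 : Set (Set ↥𝓑)} (h𝒲 : 𝒲 ∈ hyperOpenCovers 𝓑) :
    IsBCover 𝓑 {U | IsOpen U ∧ ∃ W ∈ 𝒲, upperBasic 𝓑 U ⊆ W} := by
  refine ⟨fun U hU => hU.1, fun B hB => ?_⟩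
  obtain ⟨W, hW, hBW⟩ := h𝒲.2.symm ▸ mem_univ (⟨B, hB⟩ : ↥𝓑)
  obtain ⟨U, hU, hBU, hUW⟩ := exists_upperBasic_subset_of_isOpen 𝓑 (h𝒲.1 W hW) hBW
  exact ⟨U, ⟨hU, W, hW, hUW⟩, hBU⟩

theorem image_upperBasic_mem_hyperOpenCovers {𝒰 : Set (Set X)} (h𝒰 : IsBCover 𝓑 𝒰) :
    upperBasic 𝓑 '' 𝒰 ∈ hyperOpenCovers 𝓑 := by
  refine ⟨?_, eq_univ_of_forall fun b => ?_⟩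
  · rintro _ ⟨U, hU, rfl⟩
    exact isOpen_upperBasic 𝓑 (h𝒰.1 U hU)
  · obtain ⟨U, hU, hbU⟩ := h𝒰.2 b b.2
    exact ⟨_, mem_image_of_mem _ hU, hbU⟩

variable {ι : Type*} {U : ι → Set X} {W : ι → Set ↥𝓑}

theorem range_mem_hyperOpenCovers (hU : IsBCover 𝓑 (range U))
    (hUW : ∀ i, IsOpen[upperTop 𝓑] (W i) ∧ upperBasic 𝓑 (U i) ⊆ W i) :
    range W ∈ hyperOpenCovers 𝓑 := by
  refine ⟨forall_mem_range.2 fun i => (hUW i).1, eq_univ_of_forall fun b => ?_⟩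
  obtain ⟨_, ⟨i, rfl⟩, hbU⟩ := hU.2 b b.2
  exact ⟨W i, mem_range_self i, (hUW i).2 hbU⟩

theorem isBCover_range (hW : range W ∈ hyperOpenCovers 𝓑)
    (hWU : ∀ i, IsOpen (U i) ∧ W i ⊆ upperBasic 𝓑 (U i)) : IsBCover 𝓑 (range U) := by
  refine ⟨forall_mem_range.2 fun i => (hWU i).1, fun B hB => ?_⟩
  obtain ⟨_, ⟨i, rfl⟩, hBW⟩ := hW.2.symm ▸ mem_univ (⟨B, hB⟩ : ↥𝓑)
  exact ⟨U i, mem_range_self i, (hWU i).2 hBW⟩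

end Hyperspace

theorem statement2_general {X : Type*} [TopologicalSpace X] (𝓑 : Set (Set X)) :
    S1 {𝒰 | IsBCover 𝓑 𝒰} {𝒰 | IsBCover 𝓑 𝒰} ↔
      S1 (hyperOpenCovers 𝓑) (hyperOpenCovers 𝓑) := by
  constructor
  · refine S1.of_refines (fun U W => IsOpen[upperTop 𝓑] W ∧ upperBasic 𝓑 U ⊆ W)
      (fun 𝒲 h𝒲 => ⟨_, isBCover_setOf_upperBasic_subset 𝓑 h𝒲, ?_⟩)
      (fun _ _ hUW hU => range_mem_hyperOpenCovers 𝓑 hU hUW)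
    rintro U ⟨-, W, hW, hUW⟩
    exact ⟨W, hW, h𝒲.1 W hW, hUW⟩
  · refine S1.of_refines (fun W U => IsOpen U ∧ W ⊆ upperBasic 𝓑 U)
      (fun 𝒰 h𝒰 => ⟨_, image_upperBasic_mem_hyperOpenCovers 𝓑 h𝒰, ?_⟩)
      (fun _ _ hWU hW => isBCover_range 𝓑 hW hWU)
    rintro _ ⟨U, hU, rfl⟩
    exact ⟨U, hU, h𝒰.1 U hU, subset_rfl⟩

/-- `S₁(O_𝓑, O_𝓑)` holds in `X` iff `S₁(O(𝓑⁺), O(𝓑⁺))` holds, where `𝓑` is a family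
of nonempty subsets of `X`. -/
theorem statement2 {X : Type*} [TopologicalSpace X] (𝓑 : Set (Set X))
    (hne : ∀ B ∈ 𝓑, B.Nonempty) :
    S1 {𝒰 | IsBCover 𝓑 𝒰} {𝒰 | IsBCover 𝓑 𝒰} ↔
      S1 (hyperOpenCovers 𝓑) (hyperOpenCovers 𝓑) :=
  statement2_general 𝓑
end

section
/- For a topological space X and a family B of nonempty subsets of X, the selection principle S_fin(O_B, O_B) holds in X if and only if S_fin(O(B⁺), O(B⁺)) holds, where B⁺ is B with the upper semi-finite topology. -/
/-- The selection principle `S_fin(𝒜, 𝒞)`. -/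
def Sfin {α : Type*} (𝒜 𝒞 : Set (Set α)) : Prop :=
  ∀ A : ℕ → Set α, (∀ n, A n ∈ 𝒜) →
    ∃ C : ℕ → Set α, (∀ n, C n ⊆ A n ∧ (C n).Finite) ∧ (⋃ n, C n) ∈ 𝒞

/-!
Both families of covers are related by `U ↦ ⟨U⟩`. A `𝓑`-cover `𝒰` gives the open cover
`{⟨U⟩ : U ∈ 𝒰}` of `𝓑⁺`; conversely, since the sets `⟨U⟩` form a basis of `𝓑⁺`, an open cover
`𝒲` of `𝓑⁺` is refined by `{⟨U⟩ : ⟨U⟩ ⊆ W ∈ 𝒲}`, whose index sets `U` form a `𝓑`-cover.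
A finite selection on one side is pushed to the other by choosing, for each selected set,
one member of the original cover that it refines.
-/

open TopologicalSpace Topology

theorem Sfin.of_refinement {α β : Type*} {𝒜 𝒞 : Set (Set α)} {𝒜' 𝒞' : Set (Set β)}
    (R : α → β → Prop) (h : Sfin 𝒜 𝒞)
    (h𝒜 : ∀ A' ∈ 𝒜', ∃ A ∈ 𝒜, ∀ u ∈ A, ∃ v ∈ A', R u v)
    (h𝒞 : ∀ C ∈ 𝒞, ∀ D : Set β, (∀ v ∈ D, ∃ A' ∈ 𝒜', v ∈ A') →
      (∀ u ∈ C, ∃ v ∈ D, R u v) → D ∈ 𝒞') :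
    Sfin 𝒜' 𝒞' := by
  intro A' hA'
  choose A hA hAR using fun n => h𝒜 (A' n) (hA' n)
  obtain ⟨C, hC, hC𝒞⟩ := h A hA
  choose g hgA' hgR using fun n (u : C n) => hAR n u ((hC n).1 u.2)
  have hfin : ∀ n, (Set.range (g n)).Finite := fun n =>
    have := (hC n).2.to_subtype
    Set.finite_range _
  refine ⟨fun n => Set.range (g n), fun n => ⟨Set.range_subset_iff.2 (hgA' n), hfin n⟩,
    h𝒞 _ hC𝒞 _ ?_ ?_⟩
  · simp only [Set.mem_iUnion]
    rintro _ ⟨n, u, rfl⟩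
    exact ⟨A' n, hA' n, hgA' n u⟩
  · intro u hu
    obtain ⟨n, hu⟩ := Set.mem_iUnion.1 hu
    exact ⟨g n ⟨u, hu⟩, Set.mem_iUnion.2 ⟨n, ⟨u, hu⟩, rfl⟩, hgR n ⟨u, hu⟩⟩

section UpperTop

variable {X : Type*} [TopologicalSpace X] (𝓑 : Set (Set X))

/-- The basic set `⟨U⟩ = {B ∈ 𝓑 : B ⊆ U}` of the upper semi-finite topology. -/
def upperBasicSet (U : Set X) : Set ↥𝓑 :=
  {b | (b : Set X) ⊆ U}

theorem upperTop_isTopologicalBasis :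
    @IsTopologicalBasis _ (upperTop 𝓑) {S | ∃ U : Set X, IsOpen U ∧ S = upperBasicSet 𝓑 U} := by
  let := upperTop 𝓑
  refine ⟨?_, Set.eq_univ_of_forall fun b => ?_, rfl⟩
  · rintro _ ⟨U, hU, rfl⟩ _ ⟨V, hV, rfl⟩ b hb
    exact ⟨upperBasicSet 𝓑 (U ∩ V), ⟨U ∩ V, hU.inter hV, rfl⟩, Set.subset_inter hb.1 hb.2,
      fun c hc => ⟨hc.trans Set.inter_subset_left, hc.trans Set.inter_subset_right⟩⟩
  · exact ⟨upperBasicSet 𝓑 Set.univ, ⟨Set.univ, isOpen_univ, rfl⟩, Set.subset_univ _⟩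

theorem isOpen_upperBasicSet {U : Set X} (hU : IsOpen U) :
    IsOpen[upperTop 𝓑] (upperBasicSet 𝓑 U) :=
  GenerateOpen.basic _ ⟨U, hU, rfl⟩

theorem exists_upperBasicSet_subset {W : Set ↥𝓑} (hW : IsOpen[upperTop 𝓑] W) {b : ↥𝓑}
    (hb : b ∈ W) : ∃ U, IsOpen U ∧ (b : Set X) ⊆ U ∧ upperBasicSet 𝓑 U ⊆ W := by
  obtain ⟨_, ⟨U, hU, rfl⟩, hbU, hUW⟩ :=
    ((upperTop_isTopologicalBasis 𝓑).isOpen_iff (t := upperTop 𝓑)).1 hW b hb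
  exact ⟨U, hU, hbU, hUW⟩

theorem isBCover_of_mem_hyperOpenCovers {𝒲 : Set (Set ↥𝓑)} (h𝒲 : 𝒲 ∈ hyperOpenCovers 𝓑) :
    IsBCover 𝓑 {U | IsOpen U ∧ ∃ W ∈ 𝒲, upperBasicSet 𝓑 U ⊆ W} := by
  refine ⟨fun U hU => hU.1, fun B hB => ?_⟩
  obtain ⟨W, hW, hBW⟩ := Set.mem_sUnion.1 (h𝒲.2.symm ▸ Set.mem_univ (⟨B, hB⟩ : ↥𝓑))
  obtain ⟨U, hU, hBU, hUW⟩ := exists_upperBasicSet_subset 𝓑 (h𝒲.1 W hW) hBW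
  exact ⟨U, ⟨hU, W, hW, hUW⟩, hBU⟩

theorem image_upperBasicSet_mem_hyperOpenCovers {𝒰 : Set (Set X)} (h𝒰 : IsBCover 𝓑 𝒰) :
    upperBasicSet 𝓑 '' 𝒰 ∈ hyperOpenCovers 𝓑 := by
  refine ⟨?_, Set.eq_univ_of_forall fun b => ?_⟩
  · rintro _ ⟨U, hU, rfl⟩
    exact isOpen_upperBasicSet 𝓑 (h𝒰.1 U hU)
  · obtain ⟨U, hU, hbU⟩ := h𝒰.2 b b.2
    exact ⟨_, ⟨U, hU, rfl⟩, hbU⟩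

theorem sfin_hyperOpenCovers_of_sfin_isBCover
    (h : Sfin {𝒰 | IsBCover 𝓑 𝒰} {𝒰 | IsBCover 𝓑 𝒰}) :
    Sfin (hyperOpenCovers 𝓑) (hyperOpenCovers 𝓑) := by
  refine h.of_refinement (fun U W => upperBasicSet 𝓑 U ⊆ W)
    (fun 𝒲 h𝒲 => ⟨_, isBCover_of_mem_hyperOpenCovers 𝓑 h𝒲, fun U hU => hU.2⟩) ?_
  intro 𝒰 h𝒰 𝒟 h𝒟 hrefine
  refine ⟨fun W hW => ?_, Set.eq_univ_of_forall fun b => ?_⟩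
  · obtain ⟨𝒲, h𝒲, hW𝒲⟩ := h𝒟 W hW
    exact h𝒲.1 W hW𝒲
  · obtain ⟨U, hU, hbU⟩ := h𝒰.2 b b.2
    obtain ⟨W, hW, hUW⟩ := hrefine U hU
    exact ⟨W, hW, hUW hbU⟩

theorem sfin_isBCover_of_sfin_hyperOpenCovers
    (h : Sfin (hyperOpenCovers 𝓑) (hyperOpenCovers 𝓑)) :
    Sfin {𝒰 | IsBCover 𝓑 𝒰} {𝒰 | IsBCover 𝓑 𝒰} := by
  refine h.of_refinement (fun W U => W ⊆ upperBasicSet 𝓑 U)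
    (fun 𝒰 h𝒰 => ⟨_, image_upperBasicSet_mem_hyperOpenCovers 𝓑 h𝒰,
      fun _ ⟨U, hU, hW⟩ => ⟨U, hU, hW.ge⟩⟩) ?_
  intro 𝒲 h𝒲 𝒟 h𝒟 hrefine
  refine ⟨fun U hU => ?_, fun B hB => ?_⟩
  · obtain ⟨𝒰, h𝒰, hU𝒰⟩ := h𝒟 U hU
    exact h𝒰.1 U hU𝒰
  · obtain ⟨W, hW, hBW⟩ := Set.mem_sUnion.1 (h𝒲.2.symm ▸ Set.mem_univ (⟨B, hB⟩ : ↥𝓑))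
    obtain ⟨U, hU, hWU⟩ := hrefine W hW
    exact ⟨U, hU, hWU hBW⟩

end UpperTop

theorem statement3_general {X : Type*} [TopologicalSpace X] (𝓑 : Set (Set X)) :
    Sfin {𝒰 | IsBCover 𝓑 𝒰} {𝒰 | IsBCover 𝓑 𝒰} ↔
      Sfin (hyperOpenCovers 𝓑) (hyperOpenCovers 𝓑) :=
  ⟨sfin_hyperOpenCovers_of_sfin_isBCover 𝓑, sfin_isBCover_of_sfin_hyperOpenCovers 𝓑⟩

/-- `S_fin(O_𝓑, O_𝓑)` holds in `X` iff `S_fin(O(𝓑⁺), O(𝓑⁺))` holds, where `𝓑` is a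
family of nonempty subsets of `X`. -/
theorem statement3 {X : Type*} [TopologicalSpace X] (𝓑 : Set (Set X))
    (hne : ∀ B ∈ 𝓑, B.Nonempty) :
    Sfin {𝒰 | IsBCover 𝓑 𝒰} {𝒰 | IsBCover 𝓑 𝒰} ↔
      Sfin (hyperOpenCovers 𝓑) (hyperOpenCovers 𝓑) :=
  statement3_general 𝓑
end

section
/- Let X be a topological space and B a family of subsets of X. If U is a nontrivial B-covering of X (i.e., X ∉ U) and F is a finite subset of U, then U \ F is still a B-covering of X. -/
/-- `𝓑` is a bornology on `X`: an ideal of subsets of `X` covering `X`. -/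
structure IsBornology {X : Type*} (𝓑 : Set (Set X)) : Prop where
  covers : ∀ x : X, ∃ B ∈ 𝓑, x ∈ B
  subset_mem : ∀ ⦃A B : Set X⦄, A ⊆ B → B ∈ 𝓑 → A ∈ 𝓑
  union_mem : ∀ ⦃A B : Set X⦄, A ∈ 𝓑 → B ∈ 𝓑 → A ∪ B ∈ 𝓑

/-- `𝓑₀` is a compact base for the bornology `𝓑`: a cofinal subfamily consisting of
compact sets. -/
def IsCompactBase {X : Type*} [TopologicalSpace X] (𝓑 𝓑₀ : Set (Set X)) : Prop :=
  𝓑₀ ⊆ 𝓑 ∧ (∀ B ∈ 𝓑₀, IsCompact B) ∧ ∀ B ∈ 𝓑, ∃ B₀ ∈ 𝓑₀, B ⊆ B₀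

/-!
Pick a point `x_V ∉ V` for each of the finitely many `V ∈ F` (possible since `V ≠ X`).
Any `B ∈ 𝓑` together with these points is still bounded, so it lies in some `U ∈ 𝒰`;
this `U` contains every `x_V`, hence is none of the `V ∈ F`.
-/

namespace IsBornology

variable {X : Type*} {𝓑 : Set (Set X)}

theorem singleton_mem (hB : IsBornology 𝓑) (x : X) : {x} ∈ 𝓑 := by
  obtain ⟨C, hC, hxC⟩ := hB.covers x
  exact hB.subset_mem (Set.singleton_subset_iff.mpr hxC) hC

theorem union_finite_mem (hB : IsBornology 𝓑) {A s : Set X} (hA : A ∈ 𝓑) (hs : s.Finite) :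
    A ∪ s ∈ 𝓑 := by
  induction s, hs using Set.Finite.induction_on with
  | empty => simpa using hA
  | @insert x t _ _ ht =>
    rw [Set.union_insert, Set.insert_eq]
    exact hB.union_mem (hB.singleton_mem x) ht

end IsBornology

theorem Set.Finite.exists_finite_not_subset {X : Type*} {F : Set (Set X)} (hF : F.Finite)
    (hF_ne : ∀ V ∈ F, V ≠ Set.univ) : ∃ s : Set X, s.Finite ∧ ∀ V ∈ F, ¬ s ⊆ V := by
  have hpt : ∀ V : F, ∃ x, x ∉ (V : Set X) := fun V =>
    (Set.ne_univ_iff_exists_notMem _).mp (hF_ne V V.2)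
  choose p hp using hpt
  have := hF.to_subtype
  exact ⟨Set.range p, Set.finite_range p, fun V hV hsub => hp ⟨V, hV⟩ (hsub ⟨⟨V, hV⟩, rfl⟩)⟩

theorem IsBCover.diff_finite {X : Type*} [TopologicalSpace X] {𝓑 𝒰 F : Set (Set X)}
    (hB : IsBornology 𝓑) (h𝒰 : IsBCover 𝓑 𝒰) (hF : F.Finite)
    (hF_ne : ∀ V ∈ F, V ≠ Set.univ) : IsBCover 𝓑 (𝒰 \ F) := by
  refine ⟨fun U hU => h𝒰.1 U hU.1, fun B hBmem => ?_⟩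
  obtain ⟨s, hs, hsF⟩ := hF.exists_finite_not_subset hF_ne
  obtain ⟨U, hU, hBsU⟩ := h𝒰.2 (B ∪ s) (hB.union_finite_mem hBmem hs)
  exact ⟨U, ⟨hU, fun hUF => hsF U hUF (Set.subset_union_right.trans hBsU)⟩,
    Set.subset_union_left.trans hBsU⟩

/-- Removing finitely many members from a nontrivial `𝓑`-covering (one with `X ∉ 𝒰`)
leaves a `𝓑`-covering, when `𝓑` is a bornology. -/
theorem statement4 {X : Type*} [TopologicalSpace X] (𝓑 : Set (Set X))
    (hB : IsBornology 𝓑) (𝒰 : Set (Set X)) (h𝒰 : IsBCover 𝓑 𝒰)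
    (hnt : Set.univ ∉ 𝒰) (F : Set (Set X)) (hF : F.Finite) (hF𝒰 : F ⊆ 𝒰) :
    IsBCover 𝓑 (𝒰 \ F) :=
  h𝒰.diff_finite hB hF fun _ hV hVuniv => hnt (hVuniv ▸ hF𝒰 hV)
end

section
/- Let X be a topological space, B a bornology on X, A ⊆ C_B(X), and n ∈ ω. If the zero function 0 lies in the closure of A in C_B(X), then the family U_n(A) = { f⁻¹((−1/(n+1), 1/(n+1))) : f ∈ A } is a B-covering of X. -/
/-- The topology of uniform convergence on members of `𝓑` on the space `C(X, ℝ)` of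
continuous real-valued functions: basic neighborhoods of `f` are the sets
`⟨B, ε⟩[f] = {g : ∀ x ∈ B, |f x - g x| < ε}` for `B ∈ 𝓑`, `ε > 0`. -/
def CBtop (X : Type*) [TopologicalSpace X] (𝓑 : Set (Set X)) : TopologicalSpace C(X, ℝ) :=
  TopologicalSpace.induced (fun f => UniformOnFun.ofFun 𝓑 ⇑f)
    (UniformOnFun.topologicalSpace X ℝ 𝓑)

theorem CBtop_ball_mem_nhds {X : Type*} [TopologicalSpace X] {𝓑 : Set (Set X)}
    (f : C(X, ℝ)) {B : Set X} (hB : B ∈ 𝓑) {ε : ℝ} (hε : 0 < ε) :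
    {g : C(X, ℝ) | ∀ x ∈ B, |f x - g x| < ε} ∈ @nhds _ (CBtop X 𝓑) f := by
  rw [CBtop, nhds_induced]
  have hU := UniformOnFun.gen_mem_nhds ℝ 𝓑 (UniformOnFun.ofFun 𝓑 ⇑f) hB
    (Metric.dist_mem_uniformity hε)
  filter_upwards [Filter.preimage_mem_comap hU] with g hg x hx
  simpa [Real.dist_eq] using hg x hx

theorem exists_close_of_mem_closure_CBtop {X : Type*} [TopologicalSpace X]
    {𝓑 : Set (Set X)} {A : Set C(X, ℝ)} {f : C(X, ℝ)} (hf : f ∈ @closure _ (CBtop X 𝓑) A)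
    {B : Set X} (hB : B ∈ 𝓑) {ε : ℝ} (hε : 0 < ε) :
    ∃ g ∈ A, ∀ x ∈ B, |f x - g x| < ε :=
  let ⟨g, hg, hgA⟩ := (@mem_closure_iff_nhds _ (CBtop X 𝓑) _ _).1 hf _
    (CBtop_ball_mem_nhds f hB hε)
  ⟨g, hgA, hg⟩

theorem statement6_general {X : Type*} [TopologicalSpace X] (𝓑 : Set (Set X))
    (A : Set C(X, ℝ)) (n : ℕ)
    (h0 : (0 : C(X, ℝ)) ∈ @closure _ (CBtop X 𝓑) A) :
    IsBCover 𝓑 {V | ∃ f ∈ A, V = ⇑f ⁻¹' Set.Ioo (-(1 / (n + 1) : ℝ)) (1 / (n + 1))} := by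
  refine ⟨?_, fun B hB => ?_⟩
  · rintro U ⟨f, -, rfl⟩
    exact isOpen_Ioo.preimage f.continuous
  · have hε : (0 : ℝ) < 1 / (n + 1) := by positivity
    obtain ⟨f, hfA, hf⟩ := exists_close_of_mem_closure_CBtop h0 hB hε
    refine ⟨_, ⟨f, hfA, rfl⟩, fun x hx => ?_⟩
    simpa [abs_lt] using hf x hx

/-- If the zero function lies in the closure of `A ⊆ C_𝓑(X)`, then the family
`𝒰ₙ(A) = { f⁻¹((-1/(n+1), 1/(n+1))) : f ∈ A }` is a `𝓑`-covering of `X`. -/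
theorem statement6 {X : Type*} [TopologicalSpace X] (𝓑 : Set (Set X))
    (hB : IsBornology 𝓑) (A : Set C(X, ℝ)) (n : ℕ)
    (h0 : (0 : C(X, ℝ)) ∈ @closure _ (CBtop X 𝓑) A) :
    IsBCover 𝓑 {V | ∃ f ∈ A, V = ⇑f ⁻¹' Set.Ioo (-(1 / (n + 1) : ℝ)) (1 / (n + 1))} :=
  statement6_general 𝓑 A n h0
end

section
/- Let X be a topological space with a bornology B, and let (Aₙ) be a sequence of finite subsets of C_B(X). If ⋃ₙ Aₙ has 0 in its closure and for each n and each g ∈ Aₙ there is a proper open set U_g ⊊ X with g ≡ 1 on X \ U_g, then the family ⋃ₙ {U_g : g ∈ Aₙ} is a B-covering of X. -/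
theorem CBtop.setOf_forall_dist_lt_mem_nhds {X : Type*} [TopologicalSpace X] {𝓑 : Set (Set X)}
    (f : C(X, ℝ)) {B : Set X} (hB : B ∈ 𝓑) {ε : ℝ} (hε : 0 < ε) :
    {g : C(X, ℝ) | ∀ x ∈ B, dist (f x) (g x) < ε} ∈ @nhds _ (CBtop X 𝓑) f :=
  (nhds_induced _ _).le <| Filter.preimage_mem_comap <|
    UniformOnFun.gen_mem_nhds ℝ 𝓑 _ hB (Metric.dist_mem_uniformity hε)

theorem CBtop.exists_mem_forall_abs_lt_of_zero_mem_closure {X : Type*} [TopologicalSpace X]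
    {𝓑 : Set (Set X)} {S : Set C(X, ℝ)} (h0 : (0 : C(X, ℝ)) ∈ @closure _ (CBtop X 𝓑) S)
    {B : Set X} (hB : B ∈ 𝓑) {ε : ℝ} (hε : 0 < ε) :
    ∃ g ∈ S, ∀ x ∈ B, |g x| < ε := by
  obtain ⟨g, hg, hgS⟩ := (@mem_closure_iff_nhds _ (CBtop X 𝓑) _ _).mp h0 _
    (CBtop.setOf_forall_dist_lt_mem_nhds 0 hB hε)
  refine ⟨g, hgS, fun x hx => ?_⟩
  simpa [Real.dist_eq, abs_sub_comm] using hg x hx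

theorem statement7_general {X : Type*} [TopologicalSpace X] (𝓑 : Set (Set X))
    (A : ℕ → Set C(X, ℝ))
    (h0 : (0 : C(X, ℝ)) ∈ @closure _ (CBtop X 𝓑) (⋃ n, A n))
    (U : C(X, ℝ) → Set X)
    (hU : ∀ n, ∀ g ∈ A n, IsOpen (U g) ∧ U g ≠ Set.univ ∧ ∀ x ∉ U g, g x = 1) :
    IsBCover 𝓑 (⋃ n, U '' A n) := by
  refine ⟨?_, fun B hB => ?_⟩
  · simp only [Set.mem_iUnion, Set.mem_image]
    rintro _ ⟨n, g, hg, rfl⟩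
    exact (hU n g hg).1
  · obtain ⟨g, hgA, hg⟩ := CBtop.exists_mem_forall_abs_lt_of_zero_mem_closure h0 hB one_pos
    obtain ⟨n, hgn⟩ := Set.mem_iUnion.mp hgA
    refine ⟨U g, Set.mem_iUnion.mpr ⟨n, Set.mem_image_of_mem U hgn⟩, fun x hxB => ?_⟩
    by_contra hxU
    have hgx := hg x hxB
    rw [(hU n g hgn).2.2 x hxU, abs_one] at hgx
    exact lt_irrefl 1 hgx

/-- If `(Aₙ)` is a sequence of finite subsets of `C_𝓑(X)` with `0` in the closure of
`⋃ₙ Aₙ`, and for each `n` and `g ∈ Aₙ` there is a proper open set `U g ⊊ X` with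
`g ≡ 1` on `X \ U g`, then `⋃ₙ {U g : g ∈ Aₙ}` is a `𝓑`-covering of `X`. -/
theorem statement7 {X : Type*} [TopologicalSpace X] (𝓑 : Set (Set X))
    (hB : IsBornology 𝓑) (A : ℕ → Set C(X, ℝ)) (hfin : ∀ n, (A n).Finite)
    (h0 : (0 : C(X, ℝ)) ∈ @closure _ (CBtop X 𝓑) (⋃ n, A n))
    (U : C(X, ℝ) → Set X)
    (hU : ∀ n, ∀ g ∈ A n, IsOpen (U g) ∧ U g ≠ Set.univ ∧ ∀ x ∉ U g, g x = 1) :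
    IsBCover 𝓑 (⋃ n, U '' A n) :=
  statement7_general 𝓑 A h0 U hU
end

section
/- Let X be a Tychonoff space, B a bornology on X with a compact base B₀, and τ the collection of open sets of X. Let Γ_B(X) be the filter on τ generated by the sets V(B) = {U ∈ τ : B ⊆ U} for B ∈ B. If K is an F₁-composable class of filters and the neighborhood filter of every point of C_B(X) belongs to K, then Γ_B(X) ∈ K. -/
universe u

/-- The image filter `R(F) = {R[F₀] : F₀ ∈ F}↑` of a filter `F` under a relation `R`. -/
def relMap {C D : Type*} (R : C → D → Prop) (F : Filter C) : Filter D :=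
  F.lift' fun s => {d | ∃ c ∈ s, R c d}

/-- A class of filters `K` is `F₁`-composable if for every relation `R ⊆ C × D` and
every proper filter `F ∈ K` on `C`, if `R(F)` is a proper filter on `D` then
`R(F) ∈ K`. -/
def F1Composable (K : (C : Type u) → Filter C → Prop) : Prop :=
  ∀ (C D : Type u) (R : C → D → Prop) (F : Filter C), F.NeBot → K C F →
    (relMap R F).NeBot → K D (relMap R F)

/-- A class of filters `K` is `F_ω`-steady if for every proper filter `F ∈ K` and
every countably based proper filter `G` meshing with `F`, the supremum
`F ∨ G = {F₀ ∩ G₀}↑` (which is `F ⊓ G` in Mathlib's order on filters) belongs to `K`. -/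
def FOmegaSteady (K : (C : Type u) → Filter C → Prop) : Prop :=
  ∀ (C : Type u) (F G : Filter C), F.NeBot → K C F → G.NeBot →
    G.IsCountablyGenerated → (∀ s ∈ F, ∀ t ∈ G, (s ∩ t).Nonempty) → K C (F ⊓ G)

/-- The filter `Γ_𝓑(X)` on the set `τ` of open sets of `X`, generated by the sets
`V(B) = {U ∈ τ : B ⊆ U}` for `B ∈ 𝓑`. -/
def GammaB {X : Type u} [TopologicalSpace X] (𝓑 : Set (Set X)) :
    Filter {U : Set X // IsOpen U} :=
  Filter.generate {S | ∃ B ∈ 𝓑, S = {U : {U : Set X // IsOpen U} | B ⊆ ↑U}}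

/-!
`Γ_𝓑(X)` is the image of the neighbourhood filter of `0` in `C_𝓑(X)` under the relation
`g R U ↔ {x | |g x| < 1} ⊆ U`, so `F₁`-composability transfers membership in `K`.
The basic neighbourhood `{g | ∀ x ∈ B, |g x| < 1}` is sent into `V(B)`. Conversely, if
`B ⊆ B₀` with `B₀` compact and `U ⊇ B₀` is open, a continuous function vanishing on `B₀` and
equal to `1` off `U` lies in every neighbourhood `{g | ∀ x ∈ B, |g x| < ε}` and is `R`-related
to `U`; it comes from Urysohn's lemma in the Stone–Čech compactification.
-/

open Filter Set Topology

theorem CompletelyRegularSpace.exists_continuous_zero_one_of_isCompact {X : Type*}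
    [TopologicalSpace X] [CompletelyRegularSpace X] {K C : Set X} (hK : IsCompact K)
    (hC : IsClosed C) (hKC : Disjoint K C) :
    ∃ f : C(X, ℝ), EqOn f 0 K ∧ EqOn f 1 C := by
  obtain ⟨Z, hZ, rfl⟩ := isInducing_stoneCechUnit.isClosed_iff.mp hC
  obtain ⟨f, hf0, hf1, -⟩ := exists_continuous_zero_one_of_isClosed
    (hK.image continuous_stoneCechUnit).isClosed hZ (disjoint_image_left.mpr hKC)
  exact ⟨f.comp ⟨stoneCechUnit, continuous_stoneCechUnit⟩,
    fun x hx => hf0 (mem_image_of_mem _ hx), fun x hx => hf1 hx⟩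

theorem monotone_relImage {C D : Type*} (R : C → D → Prop) :
    Monotone fun s : Set C => {d | ∃ c ∈ s, R c d} :=
  fun _ _ hst _ ⟨c, hc, hcd⟩ => ⟨c, hst hc, hcd⟩

theorem Filter.HasBasis.relMap {C D ι : Type*} {F : Filter C} {p : ι → Prop} {s : ι → Set C}
    (hF : F.HasBasis p s) (R : C → D → Prop) :
    (relMap R F).HasBasis p fun i => {d | ∃ c ∈ s i, R c d} :=
  hF.lift' (monotone_relImage R)

theorem relMap_neBot {C D : Type*} {R : C → D → Prop} {F : Filter C} [F.NeBot] {d : D}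
    (hd : ∀ c, R c d) : (relMap R F).NeBot := by
  refine (lift'_neBot_iff (monotone_relImage R)).mpr fun s hs => ?_
  obtain ⟨c, hc⟩ := Filter.nonempty_of_mem hs
  exact ⟨d, c, hc, hd c⟩

theorem IsBornology.directedOn {X : Type*} {𝓑 : Set (Set X)} (hB : IsBornology 𝓑) :
    DirectedOn (· ⊆ ·) 𝓑 :=
  fun A hA B hB' => ⟨A ∪ B, hB.union_mem hA hB', subset_union_left, subset_union_right⟩

theorem IsBornology.nonempty {X : Type*} [Nonempty X] {𝓑 : Set (Set X)} (hB : IsBornology 𝓑) :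
    𝓑.Nonempty :=
  let ⟨B, hB, _⟩ := hB.covers (Classical.arbitrary X); ⟨B, hB⟩

theorem hasBasis_nhds_CBtop {X : Type*} [TopologicalSpace X] {𝓑 : Set (Set X)}
    (h𝓑 : 𝓑.Nonempty) (hdir : DirectedOn (· ⊆ ·) 𝓑) (f : C(X, ℝ)) :
    (@nhds _ (CBtop X 𝓑) f).HasBasis (fun p : Set X × ℝ => p.1 ∈ 𝓑 ∧ 0 < p.2)
      fun p => {g | ∀ x ∈ p.1, dist (g x) (f x) < p.2} := by
  rw [CBtop, nhds_induced]
  exact (UniformOnFun.hasBasis_nhds_of_basis X ℝ 𝓑 _ h𝓑 hdir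
    Metric.uniformity_basis_dist).comap _

theorem hasBasis_gammaB {X : Type u} [TopologicalSpace X] {𝓑 : Set (Set X)}
    (h𝓑 : 𝓑.Nonempty) (hdir : DirectedOn (· ⊆ ·) 𝓑) :
    (GammaB 𝓑).HasBasis (· ∈ 𝓑) fun B => {U : {U : Set X // IsOpen U} | B ⊆ U} := by
  have : GammaB 𝓑 = ⨅ B ∈ 𝓑, 𝓟 {U : {U : Set X // IsOpen U} | B ⊆ U} := by
    rw [GammaB, generate_eq_biInf]
    simp only [Set.mem_ofPred_eq, iInf_exists, iInf_and]
    rw [iInf_comm]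
    refine iInf_congr fun B => ?_
    rw [iInf_comm]
    exact iInf_congr fun _ => iInf_iInf_eq_left
  rw [this]
  refine hasBasis_biInf_principal ?_ h𝓑
  intro A hA B hB
  obtain ⟨C, hC, hAC, hBC⟩ := hdir A hA B hB
  exact ⟨C, hC, fun U hU => hAC.trans hU, fun U hU => hBC.trans hU⟩

theorem gammaB_neBot {X : Type u} [TopologicalSpace X] (𝓑 : Set (Set X)) :
    (GammaB 𝓑).NeBot :=
  neBot_of_le (f := pure ⟨univ, isOpen_univ⟩) <|
    le_generate_iff.mpr <| by rintro _ ⟨B, -, rfl⟩; exact subset_univ B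

theorem relMap_nhds_zero_eq_gammaB {X : Type u} [TopologicalSpace X] [CompletelyRegularSpace X]
    {𝓑 𝓑₀ : Set (Set X)} (hB : IsBornology 𝓑) (h𝓑₀ : IsCompactBase 𝓑 𝓑₀) :
    relMap (fun (g : C(X, ℝ)) (U : {U : Set X // IsOpen U}) => {x | |g x| < 1} ⊆ U)
      (@nhds _ (CBtop X 𝓑) 0) = GammaB 𝓑 := by
  let := CBtop X 𝓑
  rcases isEmpty_or_nonempty X with hX | hX
  -- Here `𝓑` may be empty, but both filters are proper filters on a one-point type.
  · have := gammaB_neBot 𝓑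
    rw [eq_top_of_neBot (GammaB 𝓑)]
    exact @eq_top_of_neBot _ _ _ (relMap_neBot (d := ⟨univ, isOpen_univ⟩) fun _ => subset_univ _)
  obtain ⟨h𝓑₀𝓑, h𝓑₀compact, h𝓑₀cofinal⟩ := h𝓑₀
  refine ((hasBasis_nhds_CBtop hB.nonempty hB.directedOn 0).relMap _).ext
    (hasBasis_gammaB hB.nonempty hB.directedOn) ?_ ?_
  · rintro ⟨B, ε⟩ ⟨hB, hε⟩
    obtain ⟨B₀, hB₀, hBB₀⟩ := h𝓑₀cofinal B hB
    refine ⟨B₀, h𝓑₀𝓑 hB₀, fun U hU => ?_⟩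
    obtain ⟨h, hB₀h, hUh⟩ := CompletelyRegularSpace.exists_continuous_zero_one_of_isCompact
      (h𝓑₀compact B₀ hB₀) U.2.isClosed_compl (disjoint_compl_right_iff_subset.mpr hU)
    refine ⟨h, fun x hx => ?_, fun x hx => ?_⟩
    · simpa [hB₀h (hBB₀ hx)] using hε
    · by_contra hxU
      simp [hUh hxU] at hx
  · intro B hB
    refine ⟨(B, 1), ⟨hB, one_pos⟩, ?_⟩
    rintro U ⟨g, hg, hgU⟩ x hx
    exact hgU (by simpa using hg x hx)

/-- If `X` is Tychonoff, `𝓑` is a bornology with a compact base, `K` is an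
`F₁`-composable class of filters, and every neighborhood filter of `C_𝓑(X)` belongs
to `K`, then `Γ_𝓑(X) ∈ K`. -/
theorem statement13 {X : Type u} [TopologicalSpace X] [T35Space X]
    (𝓑 : Set (Set X)) (hB : IsBornology 𝓑) (hcb : ∃ 𝓑₀, IsCompactBase 𝓑 𝓑₀)
    (K : (C : Type u) → Filter C → Prop) (hK : F1Composable K)
    (hnhds : ∀ f : C(X, ℝ), K _ (@nhds _ (CBtop X 𝓑) f)) :
    K _ (GammaB 𝓑) := by
  obtain ⟨𝓑₀, h𝓑₀⟩ := hcb
  let := CBtop X 𝓑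
  rw [← relMap_nhds_zero_eq_gammaB hB h𝓑₀]
  exact hK _ _ _ _ nhds_neBot (hnhds 0)
    (relMap_neBot (d := ⟨univ, isOpen_univ⟩) fun _ => subset_univ _)
end

section
/- Let X be a topological space, B a bornology on X with a compact base, and suppose X is a γ_B-space (every nontrivial B-covering of X has a countable B-cofinite subcovering). Then every closed subspace Y of X is a γ_{B_Y}-space, where B_Y = {B ∩ Y : B ∈ B}. -/
/-- `𝒰` is a `𝓑`-cofinite covering: an infinite family of proper open sets such that
for every `B ∈ 𝓑` all but finitely many members of `𝒰` contain `B`. -/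
def IsBCofinite {X : Type*} [TopologicalSpace X] (𝓑 𝒰 : Set (Set X)) : Prop :=
  𝒰.Infinite ∧ (∀ U ∈ 𝒰, IsOpen U ∧ U ≠ Set.univ) ∧
    ∀ B ∈ 𝓑, {U ∈ 𝒰 | ¬ B ⊆ U}.Finite

/-- `X` is a `γ_𝓑`-space: every nontrivial `𝓑`-covering of `X` has a countable
`𝓑`-cofinite subcovering. -/
def GammaBSpace {X : Type*} [TopologicalSpace X] (𝓑 : Set (Set X)) : Prop :=
  ∀ 𝒰 : Set (Set X), IsBCover 𝓑 𝒰 → Set.univ ∉ 𝒰 →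
    ∃ 𝒱 ⊆ 𝒰, 𝒱.Countable ∧ IsBCofinite 𝓑 𝒱 ∧ IsBCover 𝓑 𝒱

/-- The trace bornology `𝓑_Y = {B ∩ Y : B ∈ 𝓑}` on the subspace `Y`. -/
def traceBorn {X : Type*} (𝓑 : Set (Set X)) (Y : Set X) : Set (Set ↥Y) :=
  {S | ∃ B ∈ 𝓑, S = Subtype.val ⁻¹' B}

/-!
Extend each relatively open `U ⊆ Y` to the open set `U ∪ Yᶜ` of `X` (open because `Y` is
closed). A member `B ∩ Y` of the trace bornology lies in `U` exactly when `B` lies in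
`U ∪ Yᶜ`, so a `𝓑_Y`-covering of `Y` becomes a `𝓑`-covering of `X`; pulling a countable
`𝓑`-cofinite subcovering back along the inclusion `Y ↪ X` gives the required one for `Y`.
-/

open Set

section Extension

variable {X : Type*} (Y : Set X)

def extendByCompl (U : Set Y) : Set X := Subtype.val '' U ∪ Yᶜ

@[simp]
lemma preimage_val_extendByCompl (U : Set Y) :
    Subtype.val ⁻¹' extendByCompl Y U = U := by
  ext x
  simp [extendByCompl]

lemma subset_extendByCompl_iff {U : Set Y} {B : Set X} :
    B ⊆ extendByCompl Y U ↔ Subtype.val ⁻¹' B ⊆ U := by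
  constructor
  · intro h
    rw [← preimage_val_extendByCompl Y U]
    exact preimage_mono h
  · intro h x hx
    by_cases hxY : x ∈ Y
    · exact Or.inl ⟨⟨x, hxY⟩, h hx, rfl⟩
    · exact Or.inr hxY

lemma extendByCompl_eq_univ_iff {U : Set Y} : extendByCompl Y U = univ ↔ U = univ := by
  constructor
  · intro h
    rw [← preimage_val_extendByCompl Y U, h, preimage_univ]
  · rintro rfl
    simp [extendByCompl]

end Extension

section Trace

variable {X : Type*} [TopologicalSpace X] {𝓑 : Set (Set X)} {Y : Set X}

lemma isOpen_extendByCompl (hY : IsClosed Y) {U : Set Y} (hU : IsOpen U) :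
    IsOpen (extendByCompl Y U) := by
  obtain ⟨V, hV, rfl⟩ := isOpen_induced_iff.mp hU
  have : extendByCompl Y (Subtype.val ⁻¹' V) = V ∪ Yᶜ := by
    ext x
    by_cases hx : x ∈ Y <;> simp [extendByCompl, hx]
  exact this ▸ hV.union hY.isOpen_compl

lemma IsBCover.image_extendByCompl {𝒰 : Set (Set Y)} (h𝒰 : IsBCover (traceBorn 𝓑 Y) 𝒰)
    (hY : IsClosed Y) : IsBCover 𝓑 (extendByCompl Y '' 𝒰) := by
  refine ⟨?_, fun B hB => ?_⟩
  · rintro _ ⟨U, hU, rfl⟩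
    exact isOpen_extendByCompl hY (h𝒰.1 U hU)
  · obtain ⟨U, hU, hBU⟩ := h𝒰.2 _ ⟨B, hB, rfl⟩
    exact ⟨_, mem_image_of_mem _ hU, (subset_extendByCompl_iff Y).mpr hBU⟩

lemma IsBCover.image_preimage_val {𝒱 : Set (Set X)} (h𝒱 : IsBCover 𝓑 𝒱) :
    IsBCover (traceBorn 𝓑 Y) ((Subtype.val ⁻¹' ·) '' 𝒱) := by
  refine ⟨?_, ?_⟩
  · rintro _ ⟨V, hV, rfl⟩
    exact (h𝒱.1 V hV).preimage continuous_subtype_val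
  · rintro _ ⟨B, hB, rfl⟩
    obtain ⟨V, hV, hBV⟩ := h𝒱.2 B hB
    exact ⟨_, mem_image_of_mem _ hV, preimage_mono hBV⟩

lemma IsBCofinite.image_preimage_val {𝒱 : Set (Set X)} (h𝒱 : IsBCofinite 𝓑 𝒱)
    (hinj : InjOn (Subtype.val ⁻¹' · : Set X → Set Y) 𝒱)
    (hproper : ∀ V ∈ 𝒱, Subtype.val ⁻¹' V ≠ (univ : Set Y)) :
    IsBCofinite (traceBorn 𝓑 Y) ((Subtype.val ⁻¹' ·) '' 𝒱) := by
  refine ⟨h𝒱.1.image hinj, ?_, ?_⟩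
  · rintro _ ⟨V, hV, rfl⟩
    exact ⟨(h𝒱.2.1 V hV).1.preimage continuous_subtype_val, hproper V hV⟩
  · rintro _ ⟨B, hB, rfl⟩
    refine ((h𝒱.2.2 B hB).image (Subtype.val ⁻¹' ·)).subset ?_
    rintro _ ⟨⟨V, hV, rfl⟩, hBV⟩
    exact ⟨V, ⟨hV, fun h => hBV (preimage_mono h)⟩, rfl⟩

end Trace

theorem statement16_general {X : Type*} [TopologicalSpace X] (𝓑 : Set (Set X))
    (hX : GammaBSpace 𝓑) (Y : Set X) (hY : IsClosed Y) :
    GammaBSpace (traceBorn 𝓑 Y) := by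
  intro 𝒰 h𝒰 huniv
  have huniv' : univ ∉ extendByCompl Y '' 𝒰 := by
    rintro ⟨U, hU, hUe⟩
    exact huniv ((extendByCompl_eq_univ_iff Y).mp hUe ▸ hU)
  obtain ⟨𝒱, h𝒱𝒰, hcount, hcof, hcov⟩ := hX _ (h𝒰.image_extendByCompl hY) huniv'
  have hmem : ∀ V ∈ 𝒱, Subtype.val ⁻¹' V ∈ 𝒰 ∧ extendByCompl Y (Subtype.val ⁻¹' V) = V := by
    intro V hV
    obtain ⟨U, hU, rfl⟩ := h𝒱𝒰 hV
    simpa using hU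
  refine ⟨_, ?_, hcount.image _, hcof.image_preimage_val ?_ ?_, hcov.image_preimage_val⟩
  · rintro _ ⟨V, hV, rfl⟩
    exact (hmem V hV).1
  · intro V hV W hW hVW
    rw [← (hmem V hV).2, ← (hmem W hW).2]
    exact congrArg (extendByCompl Y) hVW
  · intro V hV hVuniv
    exact huniv (hVuniv ▸ (hmem V hV).1)

/-- If `𝓑` is a bornology with a compact base on `X` and `X` is a `γ_𝓑`-space, then
every closed subspace `Y` is a `γ_{𝓑_Y}`-space. -/
theorem statement16 {X : Type*} [TopologicalSpace X] (𝓑 : Set (Set X))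
    (hB : IsBornology 𝓑) (hcb : ∃ 𝓑₀, IsCompactBase 𝓑 𝓑₀)
    (hX : GammaBSpace 𝓑) (Y : Set X) (hY : IsClosed Y) :
    GammaBSpace (traceBorn 𝓑 Y) :=
  statement16_general 𝓑 hX Y hY
end

section
/- Let X and Y be disjoint topological spaces with bornologies B and L respectively. If X is a γ_B-space, Y is a γ_L-space, and the product X × Y is a γ_{B⊗L}-space, then the topological sum X + Y is a γ_{B⊕L}-space. -/
/-- The product bornology `𝓑 ⊗ 𝓛` on `X × Y`, generated by products `B ×ˢ L`. -/
def prodBorn {X Y : Type*} (𝓑 : Set (Set X)) (𝓛 : Set (Set Y)) : Set (Set (X × Y)) :=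
  {S | ∃ B ∈ 𝓑, ∃ L ∈ 𝓛, S ⊆ B ×ˢ L}

/-- The sum bornology `𝓑 ⊕ 𝓛` on the topological sum `X ⊕ Y`, generated by the sets
`B ⊔ L` with `B ∈ 𝓑`, `L ∈ 𝓛`. -/
def sumBorn2 {X Y : Type*} (𝓑 : Set (Set X)) (𝓛 : Set (Set Y)) : Set (Set (X ⊕ Y)) :=
  {S | ∃ B ∈ 𝓑, ∃ L ∈ 𝓛, S ⊆ Sum.inl '' B ∪ Sum.inr '' L}

/-! If both summands are nonempty, `U ↦ (U ∩ X) × (U ∩ Y)` turns `𝓑⊕𝓛`-covers of `X + Y` into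
`𝓑⊗𝓛`-covers of `X × Y`. Conversely `B ⊔ L ⊆ U` as soon as `(B ∪ B₁) × (L ∪ L₁)` lies in the image
of `U`, for fixed nonempty `B₁ ∈ 𝓑`, `L₁ ∈ 𝓛`; hence cofinite subcovers on `X × Y` pull back to
`X + Y`. If a summand is empty, `X + Y` is the other summand with its own bornology. -/

open Set

section Transfer

variable {Z W : Type*} [TopologicalSpace Z] [TopologicalSpace W] {𝓜 : Set (Set Z)}
  {𝓝 : Set (Set W)}

theorem GammaBSpace.nonempty (h : GammaBSpace 𝓜) : 𝓜.Nonempty := by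
  by_contra h𝓜
  rw [not_nonempty_iff_eq_empty] at h𝓜
  obtain ⟨𝒱, h𝒱, -, h𝒱cof, -⟩ := h ∅ ⟨fun _ h ↦ h.elim, by simp [h𝓜]⟩ (notMem_empty _)
  exact h𝒱cof.1 ((subset_empty_iff.mp h𝒱) ▸ finite_empty)

/- The cofinite subcover of `φ '' 𝒰` is pulled back along a subfamily of `𝒰` on which `φ` is
injective, so that countability and finiteness transfer. -/
theorem GammaBSpace.of_transfer (φ : Set Z → Set W) (h : GammaBSpace 𝓝)
    (hopen : ∀ U, IsOpen U → IsOpen (φ U)) (huniv : ∀ U, φ U = univ → U = univ)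
    (hcover : ∀ N ∈ 𝓝, ∃ M ∈ 𝓜, ∀ U, M ⊆ U → N ⊆ φ U)
    (hreflect : ∀ M ∈ 𝓜, ∃ N ∈ 𝓝, ∀ U, N ⊆ φ U → M ⊆ U) :
    GammaBSpace 𝓜 := by
  intro 𝒰 h𝒰 h𝒰univ
  have hφ𝒰 : IsBCover 𝓝 (φ '' 𝒰) := by
    refine ⟨fun _ ⟨U, hU, hφU⟩ ↦ hφU ▸ hopen U (h𝒰.1 U hU), fun N hN ↦ ?_⟩
    obtain ⟨M, hM, hMN⟩ := hcover N hN
    obtain ⟨U, hU, hMU⟩ := h𝒰.2 M hM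
    exact ⟨φ U, mem_image_of_mem φ hU, hMN U hMU⟩
  have hφ𝒰univ : univ ∉ φ '' 𝒰 := fun ⟨U, hU, hφU⟩ ↦ h𝒰univ (huniv U hφU ▸ hU)
  obtain ⟨𝒲, h𝒲, h𝒲count, h𝒲cof, h𝒲cov⟩ := h _ hφ𝒰 hφ𝒰univ
  obtain ⟨𝒱, h𝒱, hbij⟩ := SurjOn.exists_bijOn_subset h𝒲
  refine ⟨𝒱, h𝒱, hbij.mapsTo.countable_of_injOn hbij.injOn h𝒲count, ⟨?_, ?_, ?_⟩, ?_, ?_⟩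
  · exact Infinite.of_image φ (hbij.image_eq ▸ h𝒲cof.1)
  · exact fun U hU ↦ ⟨h𝒰.1 U (h𝒱 hU), fun hUuniv ↦ h𝒰univ (hUuniv ▸ h𝒱 hU)⟩
  · intro M hM
    obtain ⟨N, hN, hNM⟩ := hreflect M hM
    refine Finite.of_injOn (t := {W ∈ 𝒲 | ¬ N ⊆ W}) ?_ (hbij.injOn.mono (sep_subset _ _))
      (h𝒲cof.2.2 N hN)
    exact fun U hU ↦ ⟨hbij.mapsTo hU.1, fun hNU ↦ hU.2 (hNM U hNU)⟩
  · exact fun U hU ↦ h𝒰.1 U (h𝒱 hU)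
  · intro M hM
    obtain ⟨N, hN, hNM⟩ := hreflect M hM
    obtain ⟨_, hW, hNW⟩ := h𝒲cov.2 N hN
    obtain ⟨U, hU, rfl⟩ := hbij.surjOn hW
    exact ⟨U, hU, hNM U hNW⟩

end Transfer

theorem Set.eq_univ_of_preimage_inl_of_preimage_inr {X Y : Type*} {U : Set (X ⊕ Y)}
    (hX : Sum.inl ⁻¹' U = univ) (hY : Sum.inr ⁻¹' U = univ) : U = univ := by
  simp only [eq_univ_iff_forall, mem_preimage] at hX hY ⊢
  exact Sum.forall.mpr ⟨hX, hY⟩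

theorem IsBornology.exists_nonempty_mem {X : Type*} [Nonempty X] {𝓑 : Set (Set X)}
    (hB : IsBornology 𝓑) : ∃ B ∈ 𝓑, B.Nonempty :=
  let ⟨B, hB, hx⟩ := hB.covers (Classical.arbitrary X)
  ⟨B, hB, _, hx⟩

section Sum

variable {X Y : Type*} [TopologicalSpace X] [TopologicalSpace Y] {𝓑 : Set (Set X)}
  {𝓛 : Set (Set Y)}

theorem gammaBSpace_sumBorn2_of_isEmpty_left [IsEmpty X] (h𝓑 : ∅ ∈ 𝓑)
    (h : GammaBSpace 𝓛) : GammaBSpace (sumBorn2 𝓑 𝓛) := by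
  refine h.of_transfer (Sum.inr ⁻¹' ·) (fun U hU ↦ hU.preimage continuous_inr)
    (fun U hU ↦ eq_univ_of_preimage_inl_of_preimage_inr (Subsingleton.elim _ _) hU) ?_ ?_
  · exact fun L hL ↦ ⟨_, ⟨∅, h𝓑, L, hL, subset_rfl⟩,
      fun U hU ↦ image_subset_iff.mp (subset_union_right.trans hU)⟩
  · rintro M ⟨B, -, L, hL, hM⟩
    refine ⟨L, hL, fun U hLU ↦ hM.trans (union_subset ?_ (image_subset_iff.mpr hLU))⟩
    simp

theorem gammaBSpace_sumBorn2_of_isEmpty_right [IsEmpty Y] (h𝓛 : ∅ ∈ 𝓛)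
    (h : GammaBSpace 𝓑) : GammaBSpace (sumBorn2 𝓑 𝓛) := by
  refine h.of_transfer (Sum.inl ⁻¹' ·) (fun U hU ↦ hU.preimage continuous_inl)
    (fun U hU ↦ eq_univ_of_preimage_inl_of_preimage_inr hU (Subsingleton.elim _ _)) ?_ ?_
  · exact fun B hB ↦ ⟨_, ⟨B, hB, ∅, h𝓛, subset_rfl⟩,
      fun U hU ↦ image_subset_iff.mp (subset_union_left.trans hU)⟩
  · rintro M ⟨B, hB, L, -, hM⟩
    refine ⟨B, hB, fun U hBU ↦ hM.trans (union_subset (image_subset_iff.mpr hBU) ?_)⟩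
    simp

theorem gammaBSpace_sumBorn2_of_prodBorn [Nonempty X] [Nonempty Y] (hB : IsBornology 𝓑)
    (hL : IsBornology 𝓛) (h : GammaBSpace (prodBorn 𝓑 𝓛)) : GammaBSpace (sumBorn2 𝓑 𝓛) := by
  obtain ⟨B₁, hB₁, x₁, hx₁⟩ := hB.exists_nonempty_mem
  obtain ⟨L₁, hL₁, y₁, hy₁⟩ := hL.exists_nonempty_mem
  refine h.of_transfer (fun U ↦ (Sum.inl ⁻¹' U) ×ˢ (Sum.inr ⁻¹' U))
    (fun U hU ↦ (hU.preimage continuous_inl).prod (hU.preimage continuous_inr))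
    (fun U hU ↦ eq_univ_of_preimage_inl_of_preimage_inr (prod_eq_univ.mp hU).1
      (prod_eq_univ.mp hU).2) ?_ ?_
  · rintro N ⟨B, hB, L, hL, hN⟩
    refine ⟨_, ⟨B, hB, L, hL, subset_rfl⟩, fun U hU ↦ hN.trans (prod_mono ?_ ?_)⟩
    · exact image_subset_iff.mp (subset_union_left.trans hU)
    · exact image_subset_iff.mp (subset_union_right.trans hU)
  · rintro M ⟨B, hB', L, hL', hM⟩
    refine ⟨(B ∪ B₁) ×ˢ (L ∪ L₁), ⟨_, hB.union_mem hB' hB₁, _, hL.union_mem hL' hL₁, subset_rfl⟩,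
      fun U hU ↦ hM.trans ?_⟩
    obtain ⟨hBU, hLU⟩ := (prod_subset_prod_iff' ⟨(x₁, y₁), Or.inr hx₁, Or.inr hy₁⟩).mp hU
    exact union_subset (image_subset_iff.mpr (subset_union_left.trans hBU))
      (image_subset_iff.mpr (subset_union_left.trans hLU))

end Sum

/-- If `X` is a `γ_𝓑`-space, `Y` is a `γ_𝓛`-space and `X × Y` is a `γ_{𝓑⊗𝓛}`-space,
then the topological sum `X + Y` is a `γ_{𝓑⊕𝓛}`-space. -/
theorem statement17 {X Y : Type*} [TopologicalSpace X] [TopologicalSpace Y]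
    (𝓑 : Set (Set X)) (𝓛 : Set (Set Y))
    (hB : IsBornology 𝓑) (hL : IsBornology 𝓛)
    (h1 : GammaBSpace 𝓑) (h2 : GammaBSpace 𝓛)
    (h3 : GammaBSpace (prodBorn 𝓑 𝓛)) :
    GammaBSpace (sumBorn2 𝓑 𝓛) := by
  rcases isEmpty_or_nonempty X with hX | hX
  · obtain ⟨B, hB'⟩ := h1.nonempty
    exact gammaBSpace_sumBorn2_of_isEmpty_left (hB.subset_mem (empty_subset B) hB') h2
  rcases isEmpty_or_nonempty Y with hY | hY
  · obtain ⟨L, hL'⟩ := h2.nonempty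
    exact gammaBSpace_sumBorn2_of_isEmpty_right (hL.subset_mem (empty_subset L) hL') h1
  exact gammaBSpace_sumBorn2_of_prodBorn hB hL h3
end

section
/- Let X be a topological space with a family B of subsets, and let f, g : ω → [2, ℵ₀) be unbounded functions. If Player II has a winning strategy in the game G_f(O_B, O_B), then Player II has a winning strategy in G_g(O_B, O_B). -/
/-- `σ` is a winning strategy for Player II in the game `G_φ(O_𝓑, O_𝓑)`: in inning `n`
Player I chooses a `𝓑`-covering `A n` and Player II (following `σ`, applied to the
history of Player I's moves) selects a subfamily of size `< φ n`; Player II wins a play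
if the union of the selections is a `𝓑`-covering. -/
def IIWinning {X : Type*} [TopologicalSpace X] (𝓑 : Set (Set X)) (φ : ℕ → ℕ)
    (σ : List (Set (Set X)) → Set (Set X)) : Prop :=
  ∀ A : ℕ → Set (Set X), (∀ n, IsBCover 𝓑 (A n)) →
    (∀ n, σ (List.ofFn fun i : Fin (n + 1) => A i) ⊆ A n ∧
        (σ (List.ofFn fun i : Fin (n + 1) => A i)).Finite ∧
        (σ (List.ofFn fun i : Fin (n + 1) => A i)).ncard < φ n) ∧
      IsBCover 𝓑 (⋃ n, σ (List.ofFn fun i : Fin (n + 1) => A i))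

/-- `τ` is a winning strategy for Player I in the game `G_φ(O_𝓑, O_𝓑)`: `τ` always
plays `𝓑`-coverings (as a function of the history of Player II's moves), and for every
sequence of legal responses of Player II, the union of the selections is not a
`𝓑`-covering. -/
def IWinning {X : Type*} [TopologicalSpace X] (𝓑 : Set (Set X)) (φ : ℕ → ℕ)
    (τ : List (Set (Set X)) → Set (Set X)) : Prop :=
  (∀ l, IsBCover 𝓑 (τ l)) ∧
    ∀ C : ℕ → Set (Set X),
      (∀ n, C n ⊆ τ (List.ofFn fun i : Fin n => C i) ∧ (C n).Finite ∧
        (C n).ncard < φ n) →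
      ¬ IsBCover 𝓑 (⋃ n, C n)

/-! Since `g` is unbounded, there are innings `e 0 < e 1 < ⋯` with `f i ≤ g (e i)`. In the
`g`-game Player II answers inning `e i` by what the winning `f`-strategy answers to the
subsequence `A (e 0), …, A (e i)` of Player I's coverings, and selects nothing in all other
innings. The union of the selections is then the union produced by the `f`-strategy against
the play `A ∘ e`, hence a `𝓑`-covering. -/

open Set Filter

lemma frequently_le_of_unbounded {g : ℕ → ℕ} (hg : ∀ M, ∃ n, M ≤ g n) (M : ℕ) :
    ∃ᶠ n in atTop, M ≤ g n := by
  by_contra hfreq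
  have hlt : ∀ᶠ n in atTop, g n ≤ M :=
    (not_frequently.1 hfreq).mono fun n hn => (not_le.1 hn).le
  obtain ⟨B, hB⟩ := (isBoundedUnder_of_eventually_le hlt).bddAbove_range
  obtain ⟨n, hn⟩ := hg (B + 1)
  have := hB (mem_range_self n)
  omega

lemma exists_strictMono_forall_le_comp (f g : ℕ → ℕ) (hg : ∀ M, ∃ n, M ≤ g n) :
    ∃ e : ℕ → ℕ, StrictMono e ∧ ∀ i, f i ≤ g (e i) :=
  extraction_forall_of_frequently fun i => frequently_le_of_unbounded hg (f i)

open Classical in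
noncomputable def subseqStrategy {X : Type*} (σ : List (Set (Set X)) → Set (Set X))
    (e : ℕ → ℕ) (l : List (Set (Set X))) : Set (Set X) :=
  if h : ∃ i, e i + 1 = l.length then
    σ ((List.range (h.choose + 1)).map fun j => l.getD (e j) ∅)
  else ∅

section subseqStrategy

variable {X : Type*} (σ : List (Set (Set X)) → Set (Set X)) {e : ℕ → ℕ} (A : ℕ → Set (Set X))

lemma subseqStrategy_ofFn_of_eq (he : StrictMono e) (i : ℕ) :
    subseqStrategy σ e (List.ofFn fun k : Fin (e i + 1) => A k) =
      σ (List.ofFn fun j : Fin (i + 1) => A (e j)) := by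
  have hex : ∃ j, e j + 1 = (List.ofFn fun k : Fin (e i + 1) => A k).length :=
    ⟨i, (List.length_ofFn).symm⟩
  have hi : hex.choose = i := he.injective (by simpa using hex.choose_spec)
  rw [subseqStrategy, dif_pos hex, hi]
  congr 1
  refine List.ext_getElem (by simp) fun j hj _ => ?_
  have hj : j ≤ i := Nat.lt_succ_iff.1 (by simpa using hj)
  have hej : e j < (List.ofFn fun k : Fin (e i + 1) => A k).length := by
    simpa using Nat.lt_succ_of_le (he.monotone hj)
  simp only [List.getElem_map, List.getElem_range, List.getElem_ofFn,
    List.getD_eq_getElem _ _ hej]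

lemma subseqStrategy_ofFn_of_notMem_range {n : ℕ} (hn : n ∉ range e) :
    subseqStrategy σ e (List.ofFn fun k : Fin (n + 1) => A k) = ∅ := by
  refine dif_neg fun ⟨i, hi⟩ => hn ⟨i, ?_⟩
  simpa using hi

lemma iUnion_subseqStrategy_ofFn (he : StrictMono e) :
    ⋃ n, subseqStrategy σ e (List.ofFn fun k : Fin (n + 1) => A k) =
      ⋃ i, σ (List.ofFn fun j : Fin (i + 1) => A (e j)) := by
  refine subset_antisymm (iUnion_subset fun n => ?_) (iUnion_subset fun i => ?_)
  · by_cases hn : n ∈ range e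
    · obtain ⟨i, rfl⟩ := hn
      rw [subseqStrategy_ofFn_of_eq σ A he]
      exact subset_iUnion_of_subset i subset_rfl
    · rw [subseqStrategy_ofFn_of_notMem_range σ A hn]
      exact empty_subset _
  · rw [← subseqStrategy_ofFn_of_eq σ A he]
    exact subset_iUnion_of_subset (e i) subset_rfl

end subseqStrategy

theorem IIWinning.subseqStrategy {X : Type*} [TopologicalSpace X] {𝓑 : Set (Set X)}
    {f g : ℕ → ℕ} {σ : List (Set (Set X)) → Set (Set X)} (hσ : IIWinning 𝓑 f σ)
    {e : ℕ → ℕ} (he : StrictMono e) (hfg : ∀ i, f i ≤ g (e i)) (hg : ∀ n, 0 < g n) :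
    IIWinning 𝓑 g (subseqStrategy σ e) := by
  intro A hA
  obtain ⟨hlegal, hcover⟩ := hσ (fun i => A (e i)) (fun i => hA (e i))
  refine ⟨fun n => ?_, by rwa [iUnion_subseqStrategy_ofFn σ A he]⟩
  by_cases hn : n ∈ range e
  · obtain ⟨i, rfl⟩ := hn
    obtain ⟨hsub, hfin, hcard⟩ := hlegal i
    rw [subseqStrategy_ofFn_of_eq σ A he]
    exact ⟨hsub, hfin, hcard.trans_le (hfg i)⟩
  · rw [subseqStrategy_ofFn_of_notMem_range σ A hn]
    exact ⟨empty_subset _, finite_empty, by simpa using hg n⟩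

theorem statement19_general {X : Type*} [TopologicalSpace X] (𝓑 : Set (Set X))
    (f g : ℕ → ℕ) (hg2 : ∀ n, 2 ≤ g n)
    (hg : ∀ M, ∃ n, M ≤ g n)
    (h : ∃ σ, IIWinning 𝓑 f σ) : ∃ σ, IIWinning 𝓑 g σ := by
  obtain ⟨σ, hσ⟩ := h
  obtain ⟨e, he, hfe⟩ := exists_strictMono_forall_le_comp f g hg
  exact ⟨_, hσ.subseqStrategy he hfe fun n => two_pos.trans_le (hg2 n)⟩

/-- For unbounded `f, g : ω → [2, ℵ₀)`, if Player II has a winning strategy in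
`G_f(O_𝓑, O_𝓑)` then Player II has a winning strategy in `G_g(O_𝓑, O_𝓑)`. -/
theorem statement19 {X : Type*} [TopologicalSpace X] (𝓑 : Set (Set X))
    (f g : ℕ → ℕ) (hf2 : ∀ n, 2 ≤ f n) (hg2 : ∀ n, 2 ≤ g n)
    (hf : ∀ M, ∃ n, M ≤ f n) (hg : ∀ M, ∃ n, M ≤ g n)
    (h : ∃ σ, IIWinning 𝓑 f σ) : ∃ σ, IIWinning 𝓑 g σ :=
  statement19_general 𝓑 f g hg2 hg h
end
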